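/- With the same iterative process as above (each added vertex has active degree at least γ times the total active degree), any vertex u added at step s ≤ t/2 satisfies: the total weight of edges incident on u and fully contained in the final set S_t is at least γ(1-γ)^{-t/2}·actdeg_{S_t}(ℓ) − actdeg_{S_t}(u), and in particular if γ(1-γ)^{-t/2} ≥ 21 then this weight is at least 20·actdeg_{S_t}(ℓ). -/
import Mathlib


open Finset

/-- In the iterative process where each added vertex has degree at least `γ` times
the current total active degree, a vertex `u` added at a step `s ≤ t/2` has weight of
edges incident on `u` fully inside the final set `S t` at least
`γ(1-γ)^{-t/2}·actdeg(S t) − actdeg_{S t}(u)`; in particular if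
`γ(1-γ)^{-t/2} ≥ 21` this weight is at least `20·actdeg(S t)`. -/
theorem early_vertex_inside_weight {V : Type*} [Fintype V] [DecidableEq V]
    (w : V → V → ℝ) (hsymm : ∀ u v, w u v = w v u) (hnn : ∀ u v, 0 ≤ w u v)
    (hdiag : ∀ v, w v v = 0) (htot : ∑ u, ∑ v, w u v = 2)
    (γ : ℝ) (hγ0 : 0 < γ) (hγ1 : γ < 1)
    (t s : ℕ) (S : ℕ → Finset V) (hS0 : S 0 = ∅)
    (hstep : ∀ s' < t, ∃ v ∉ S s', S (s' + 1) = insert v (S s') ∧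
      γ * (∑ x ∈ (S s')ᶜ, ∑ y, w x y) ≤ ∑ y, w v y)
    (u : V) (hs : s < t) (hs2 : 2 * s ≤ t)
    (hu : u ∉ S s) (hSu : S (s + 1) = insert u (S s))
    (hdeg : γ * (∑ x ∈ (S s)ᶜ, ∑ y, w x y) ≤ ∑ y, w u y) :
    (∑ v ∈ S t, w u v)
        ≥ γ * (1 - γ) ^ (-(t : ℝ) / 2) * (∑ x ∈ (S t)ᶜ, ∑ y, w x y)
          - (∑ v ∈ (S t)ᶜ, w u v) ∧
    (21 ≤ γ * (1 - γ) ^ (-(t : ℝ) / 2) →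
      (∑ v ∈ S t, w u v) ≥ 20 * (∑ x ∈ (S t)ᶜ, ∑ y, w x y)) := by
  set d : V → ℝ := fun x => ∑ y, w x y with hd
  set A : ℕ → ℝ := fun n => ∑ x ∈ (S n)ᶜ, d x with hA
  have hdnn : ∀ x, 0 ≤ d x := fun x => Finset.sum_nonneg fun y _ => hnn x y
  have hAnn : ∀ n, 0 ≤ A n := fun n => Finset.sum_nonneg fun x _ => hdnn x
  have hstep' : ∀ n < t, A (n + 1) ≤ (1 - γ) * A n := by
    intro n hn
    obtain ⟨v, hv, hSn, hdv⟩ := hstep n hn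
    have hvc : v ∈ (S n)ᶜ := Finset.mem_compl.mpr hv
    have hEq : A (n + 1) = A n - d v := by
      simp only [hA, hSn, Finset.compl_insert]
      exact Finset.sum_erase_eq_sub hvc
    have hdv' : γ * A n ≤ d v := hdv
    rw [hEq]; linarith
  have key : ∀ k, s + k ≤ t → A (s + k) ≤ (1 - γ) ^ k * A s := by
    intro k
    induction k with
    | zero => simp
    | succ k ih =>
      intro hk
      have h1 : s + k < t := by omega
      have h2 := hstep' (s + k) h1
      have h3 := ih (le_of_lt h1)
      have h1γ : (0:ℝ) ≤ 1 - γ := by linarith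
      calc A (s + (k + 1)) = A (s + k + 1) := by ring_nf
        _ ≤ (1 - γ) * A (s + k) := h2
        _ ≤ (1 - γ) * ((1 - γ) ^ k * A s) := by
            exact mul_le_mul_of_nonneg_left h3 h1γ
        _ = (1 - γ) ^ (k + 1) * A s := by ring
  have hAt : A t ≤ (1 - γ) ^ (t - s) * A s := by
    have h := key (t - s) (by omega)
    rwa [show s + (t - s) = t by omega] at h
  have h1γ : (0:ℝ) < 1 - γ := by linarith
  have hrp : (1 - γ) ^ (t - s) ≤ (1 - γ) ^ ((t : ℝ) / 2) := by
    rw [← Real.rpow_natCast (1 - γ) (t - s)]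
    apply Real.rpow_le_rpow_of_exponent_ge h1γ (by linarith)
    have h2s : (2 * s : ℝ) ≤ t := by exact_mod_cast hs2
    rw [Nat.cast_sub (by omega : s ≤ t)]
    linarith
  set P : ℝ := (1 - γ) ^ ((t : ℝ) / 2) with hP
  have hPpos : 0 < P := Real.rpow_pos_of_pos h1γ _
  have hAt' : A t ≤ P * A s := le_trans hAt
    (mul_le_mul_of_nonneg_right hrp (hAnn s))
  have hneg : (1 - γ) ^ (-(t : ℝ) / 2) = P⁻¹ := by
    rw [hP, neg_div, Real.rpow_neg (le_of_lt h1γ)]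
  have hinv : P⁻¹ * A t ≤ A s := by
    rw [inv_mul_le_iff₀ hPpos]
    exact hAt'
  have hmain : γ * (1 - γ) ^ (-(t : ℝ) / 2) * A t ≤ γ * A s := by
    rw [hneg, mul_assoc]
    exact mul_le_mul_of_nonneg_left hinv (le_of_lt hγ0)
  have hsplit : (∑ v ∈ S t, w u v) + (∑ v ∈ (S t)ᶜ, w u v) = d u :=
    Finset.sum_add_sum_compl (S t) _
  have hdu : γ * A s ≤ d u := hdeg
  have hout : (∑ v ∈ (S t)ᶜ, w u v) ≤ A t := by
    apply Finset.sum_le_sum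
    intro v _
    rw [hsymm u v]
    exact Finset.single_le_sum (fun y _ => hnn v y) (Finset.mem_univ u)
  constructor
  · linarith
  · intro h21
    have hAtnn := hAnn t
    nlinarith [hmain, hsplit, hdu, hout]
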